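/- arXiv:2207.12893 — 4 statements merged into one kernel-verified Lean document; each statement's English description precedes it below -/
import Mathlib

section
/- If a twice-differentiable function ψ on an open interval satisfies ψ'' + (1/x + 1/(2(x-4)) + 1/(2(x-16)))ψ' + (x-8)/(4x(x-4)(x-16)) ψ = 0, then ω = ψ² satisfies the third-order equation ω''' + (3/x + 3/(2(x-4)) + 3/(2(x-16)))ω'' + (7x²-68x+64)/(x²(x-4)(x-16)) ω' + 1/(x²(x-16)) ω = 0. -/
/-!
Differentiating `ω = ψ²` three times and eliminating `ψ''` by `ψ'' + p ψ' + q ψ = 0` shows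
that `ω` satisfies the symmetric square
`ω''' + 3p ω'' + (2p² + p' + 4q) ω' + (4pq + 2q') ω = 0`, for any differentiable coefficients
`p`, `q`. For the coefficients of `L₂` these are, after clearing denominators, exactly the
coefficients of `L₃`.
-/

open Set

section SymmetricSquare

variable {𝕜 : Type*} [NontriviallyNormedField 𝕜] {s : Set 𝕜} {p q ψ : 𝕜 → 𝕜}

theorem deriv_sq_eqOn (hs : IsOpen s) (hψ : DifferentiableOn 𝕜 ψ s) :
    EqOn (deriv fun t => ψ t ^ 2) (fun t => 2 * ψ t * deriv ψ t) s := by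
  intro x hx
  simpa using ((hψ.differentiableAt (hs.mem_nhds hx)).hasDerivAt.fun_pow 2).deriv

theorem deriv_deriv_sq_eqOn_of_ode (hs : IsOpen s) (hψ : DifferentiableOn 𝕜 ψ s)
    (hψ' : DifferentiableOn 𝕜 (deriv ψ) s)
    (hode : ∀ x ∈ s, deriv (deriv ψ) x + p x * deriv ψ x + q x * ψ x = 0) :
    EqOn (deriv (deriv fun t => ψ t ^ 2))
      (fun t => 2 * deriv ψ t ^ 2 - 2 * p t * ψ t * deriv ψ t - 2 * q t * ψ t ^ 2) s := by
  intro x hx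
  have hx' := hs.mem_nhds hx
  rw [((deriv_sq_eqOn hs hψ).eventuallyEq_of_mem hx').deriv_eq,
    (((hψ.differentiableAt hx').hasDerivAt.const_mul 2).fun_mul
      (hψ'.differentiableAt hx').hasDerivAt).deriv]
  linear_combination 2 * ψ x * hode x hx

theorem sq_satisfies_symmetricSquare (hs : IsOpen s) (hψ : DifferentiableOn 𝕜 ψ s)
    (hψ' : DifferentiableOn 𝕜 (deriv ψ) s)
    (hode : ∀ x ∈ s, deriv (deriv ψ) x + p x * deriv ψ x + q x * ψ x = 0)
    (hp : DifferentiableOn 𝕜 p s) (hq : DifferentiableOn 𝕜 q s) :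
    ∀ x ∈ s, deriv (deriv (deriv fun t => ψ t ^ 2)) x
      + 3 * p x * deriv (deriv fun t => ψ t ^ 2) x
      + (2 * p x ^ 2 + deriv p x + 4 * q x) * deriv (fun t => ψ t ^ 2) x
      + (4 * p x * q x + 2 * deriv q x) * ψ x ^ 2 = 0 := by
  intro x hx
  have hx' := hs.mem_nhds hx
  have dψ := (hψ.differentiableAt hx').hasDerivAt
  have dψ' := (hψ'.differentiableAt hx').hasDerivAt
  have dp := (hp.differentiableAt hx').hasDerivAt
  have dq := (hq.differentiableAt hx').hasDerivAt
  have d3 : HasDerivAt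
      (fun t => 2 * deriv ψ t ^ 2 - 2 * p t * ψ t * deriv ψ t - 2 * q t * ψ t ^ 2)
      (4 * deriv ψ x * deriv (deriv ψ) x
        - 2 * (deriv p x * ψ x * deriv ψ x + p x * deriv ψ x ^ 2
          + p x * ψ x * deriv (deriv ψ) x)
        - 2 * (deriv q x * ψ x ^ 2 + 2 * q x * ψ x * deriv ψ x)) x := by
    refine ((((dψ'.fun_pow 2).const_mul 2).fun_sub
      (((dp.const_mul 2).fun_mul dψ).fun_mul dψ')).fun_sub
      ((dq.const_mul 2).fun_mul (dψ.fun_pow 2))).congr_deriv ?_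
    push_cast
    ring
  have hω'' := deriv_deriv_sq_eqOn_of_ode hs hψ hψ' hode
  rw [(hω''.eventuallyEq_of_mem hx').deriv_eq, d3.deriv, hω'' hx, deriv_sq_eqOn hs hψ hx]
  linear_combination (4 * deriv ψ x - 2 * p x * ψ x) * hode x hx

end SymmetricSquare

noncomputable def bananaP (x : ℝ) : ℝ := 1/x + 1/(2*(x-4)) + 1/(2*(x-16))

noncomputable def bananaQ (x : ℝ) : ℝ := (x-8)/(4*x*(x-4)*(x-16))

section BananaCoefficients

variable {x : ℝ}

theorem hasDerivAt_bananaP (h0 : x ≠ 0) (h4 : x ≠ 4) (h16 : x ≠ 16) :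
    HasDerivAt bananaP (-1/x^2 - 1/(2*(x-4)^2) - 1/(2*(x-16)^2)) x := by
  have d0 := (hasDerivAt_const x (1 : ℝ)).div (hasDerivAt_id' x) h0
  have d4 := (hasDerivAt_const x (1 : ℝ)).div (((hasDerivAt_id' x).sub_const 4).const_mul 2)
    (mul_ne_zero two_ne_zero (sub_ne_zero.mpr h4))
  have d16 := (hasDerivAt_const x (1 : ℝ)).div (((hasDerivAt_id' x).sub_const 16).const_mul 2)
    (mul_ne_zero two_ne_zero (sub_ne_zero.mpr h16))
  refine ((d0.add d4).add d16).congr_deriv ?_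
  field_simp
  ring

-- `bananaQ x = -1/(32x) + 1/(48(x-4)) + 1/(96(x-16))` in partial fractions.
theorem hasDerivAt_bananaQ (h0 : x ≠ 0) (h4 : x ≠ 4) (h16 : x ≠ 16) :
    HasDerivAt bananaQ (1/(32*x^2) - 1/(48*(x-4)^2) - 1/(96*(x-16)^2)) x := by
  have dden : HasDerivAt (fun y : ℝ => 4*y*(y-4)*(y-16)) _ x :=
    (((hasDerivAt_id' x).const_mul 4).fun_mul ((hasDerivAt_id' x).sub_const 4)).fun_mul
      ((hasDerivAt_id' x).sub_const 16)
  refine (((hasDerivAt_id' x).sub_const 8).div dden (by simp [sub_eq_zero, *])).congr_deriv ?_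
  field_simp
  ring

theorem symmetricSquare_coeff_one_banana (h0 : x ≠ 0) (h4 : x ≠ 4) (h16 : x ≠ 16) :
    2 * bananaP x ^ 2 + deriv bananaP x + 4 * bananaQ x
      = (7*x^2 - 68*x + 64)/(x^2*(x-4)*(x-16)) := by
  rw [(hasDerivAt_bananaP h0 h4 h16).deriv, bananaP, bananaQ]
  field_simp
  ring

theorem symmetricSquare_coeff_zero_banana (h0 : x ≠ 0) (h4 : x ≠ 4) (h16 : x ≠ 16) :
    4 * bananaP x * bananaQ x + 2 * deriv bananaQ x = 1/(x^2*(x-16)) := by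
  rw [(hasDerivAt_bananaQ h0 h4 h16).deriv, bananaP, bananaQ]
  field_simp
  ring

end BananaCoefficients

theorem banana_symmetric_square
    (s : Set ℝ) (hs : IsOpen s)
    (hx : ∀ x ∈ s, x ≠ 0 ∧ x ≠ 4 ∧ x ≠ 16)
    (ψ : ℝ → ℝ) (hψ : ContDiffOn ℝ 2 ψ s)
    (hode : ∀ x ∈ s, deriv (deriv ψ) x
      + (1/x + 1/(2*(x-4)) + 1/(2*(x-16))) * deriv ψ x
      + (x-8)/(4*x*(x-4)*(x-16)) * ψ x = 0) :
    ∀ x ∈ s, deriv (deriv (deriv (fun t => ψ t ^ 2))) x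
      + (3/x + 3/(2*(x-4)) + 3/(2*(x-16))) * deriv (deriv (fun t => ψ t ^ 2)) x
      + (7*x^2 - 68*x + 64)/(x^2*(x-4)*(x-16)) * deriv (fun t => ψ t ^ 2) x
      + 1/(x^2*(x-16)) * ψ x ^ 2 = 0 := by
  have hP : DifferentiableOn ℝ bananaP s := fun y hy =>
    (hasDerivAt_bananaP (hx y hy).1 (hx y hy).2.1 (hx y hy).2.2).differentiableAt
      |>.differentiableWithinAt
  have hQ : DifferentiableOn ℝ bananaQ s := fun y hy =>
    (hasDerivAt_bananaQ (hx y hy).1 (hx y hy).2.1 (hx y hy).2.2).differentiableAt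
      |>.differentiableWithinAt
  intro x hxs
  obtain ⟨h0, h4, h16⟩ := hx x hxs
  have key := sq_satisfies_symmetricSquare (p := bananaP) (q := bananaQ) hs
    (hψ.differentiableOn two_ne_zero)
    ((hψ.deriv_of_isOpen (m := 1) hs (by norm_num)).differentiableOn one_ne_zero)
    hode hP hQ x hxs
  rw [symmetricSquare_coeff_one_banana h0 h4 h16, symmetricSquare_coeff_zero_banana h0 h4 h16,
    bananaP] at key
  linear_combination key
end

section
/- If a twice-differentiable nonvanishing function ω₁ on an interval avoiding 0, 4, 16 satisfies the nonlinear equation (ln ω₁)'' + (1/2)((ln ω₁)')² + 2(x²-15x+32)/(x(x-4)(x-16)) (ln ω₁)' + (x-8)/(2x(x-4)(x-16)) = 0, then ω₁ satisfies L₃ ω₁ = 0, where L₃ = d³/dx³ + (3/x + 3/(2(x-4)) + 3/(2(x-16))) d²/dx² + (7x²-68x+64)/(x²(x-4)(x-16)) d/dx + 1/(x²(x-16)). -/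
/-!
For `u = ω'/ω` the Riccati equation `u' + u²/2 + p u + q = 0` says exactly that
`2 ω ω'' = ω'² - 2 p ω ω' - 2 q ω²`. Differentiating this identity and using it once more to
eliminate `ω'²` gives, for arbitrary coefficients `p, q`, the third-order equation
`ω''' + 3 p ω'' + (2 p² + p' + 2 q) ω' + (2 p q + q') ω = 0`
(the symmetric square of `y'' + p y' + (q/2) y = 0`). For the coefficients of the theorem this
operator is `L₃`.
-/

open Filter Topology

section Riccati

variable {s : Set ℝ} {ω p q p' q' : ℝ → ℝ} {x : ℝ}

theorem two_mul_mul_deriv_deriv_of_riccati (hω : HasDerivAt ω (deriv ω x) x)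
    (hω' : HasDerivAt (deriv ω) (deriv (deriv ω) x) x) (hnz : ω x ≠ 0)
    (hode : deriv (fun t => deriv ω t / ω t) x + (1/2) * (deriv ω x / ω x)^2
      + p x * (deriv ω x / ω x) + q x = 0) :
    2 * ω x * deriv (deriv ω) x
      = deriv ω x ^ 2 - 2 * p x * ω x * deriv ω x - 2 * q x * ω x ^ 2 := by
  have hu : deriv (fun t => deriv ω t / ω t) x = _ := (hω'.div hω hnz).deriv
  rw [hu] at hode
  field_simp at hode
  linear_combination hode

theorem third_order_ode_of_riccati (hs : IsOpen s) (hω : ContDiffOn ℝ 2 ω s)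
    (hnz : ∀ x ∈ s, ω x ≠ 0) (hp : ∀ x ∈ s, HasDerivAt p (p' x) x)
    (hq : ∀ x ∈ s, HasDerivAt q (q' x) x)
    (hode : ∀ x ∈ s, deriv (fun t => deriv ω t / ω t) x + (1/2) * (deriv ω x / ω x)^2
      + p x * (deriv ω x / ω x) + q x = 0) (hx : x ∈ s) :
    deriv (deriv (deriv ω)) x + 3 * p x * deriv (deriv ω) x
      + (2 * p x ^ 2 + p' x + 2 * q x) * deriv ω x + (2 * p x * q x + q' x) * ω x = 0 := by
  have hω₁ : ∀ t ∈ s, HasDerivAt ω (deriv ω t) t := fun t ht =>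
    ((hω.differentiableOn two_ne_zero t ht).differentiableAt (hs.mem_nhds ht)).hasDerivAt
  have hω₂ : ∀ t ∈ s, HasDerivAt (deriv ω) (deriv (deriv ω) t) t := fun t ht =>
    (((hω.deriv_of_isOpen hs (by norm_num)).differentiableOn one_ne_zero t ht).differentiableAt
      (hs.mem_nhds ht)).hasDerivAt
  have hsq : ∀ t ∈ s, 2 * ω t * deriv (deriv ω) t
      = deriv ω t ^ 2 - 2 * p t * ω t * deriv ω t - 2 * q t * ω t ^ 2 := fun t ht =>
    two_mul_mul_deriv_deriv_of_riccati (hω₁ t ht) (hω₂ t ht) (hnz t ht) (hode t ht)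
  -- `ω''` is a smooth expression in `ω, ω', p, q` near `x`, hence differentiable at `x`
  have hω₃ : HasDerivAt (deriv (deriv ω)) (deriv (deriv (deriv ω)) x) x := by
    have hF : deriv (deriv ω) =ᶠ[𝓝 x] fun t =>
        (deriv ω t ^ 2 - 2 * p t * ω t * deriv ω t - 2 * q t * ω t ^ 2) / (2 * ω t) := by
      filter_upwards [hs.mem_nhds hx] with t ht
      rw [← hsq t ht]
      field_simp [hnz t ht]
    have := (hω₁ x hx).differentiableAt
    have := (hω₂ x hx).differentiableAt
    have := (hp x hx).differentiableAt
    have := (hq x hx).differentiableAt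
    refine (DifferentiableAt.congr_of_eventuallyEq ?_ hF).hasDerivAt
    have := hnz x hx
    fun_prop (disch := simp [*])
  have hG : HasDerivAt (fun t => 2 * ω t * deriv (deriv ω) t - deriv ω t ^ 2
      + 2 * p t * ω t * deriv ω t + 2 * q t * ω t ^ 2) 0 x := by
    refine (hasDerivAt_const x (0 : ℝ)).congr_of_eventuallyEq ?_
    filter_upwards [hs.mem_nhds hx] with t ht
    linear_combination hsq t ht
  have hG' := (((((hω₁ x hx).const_mul 2).mul hω₃).sub ((hω₂ x hx).pow 2)).add
    ((((hp x hx).const_mul 2).mul (hω₁ x hx)).mul (hω₂ x hx))).add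
    (((hq x hx).const_mul 2).mul ((hω₁ x hx).pow 2))
  have hzero := hG'.unique hG
  simp only [Pi.mul_apply, Pi.pow_apply] at hzero
  have hmul : 2 * ω x * (deriv (deriv (deriv ω)) x + 3 * p x * deriv (deriv ω) x
      + (2 * p x ^ 2 + p' x + 2 * q x) * deriv ω x + (2 * p x * q x + q' x) * ω x) = 0 := by
    linear_combination hzero + 2 * p x * hsq x hx
  simpa [hnz x hx] using hmul

end Riccati

-- the coefficient is `1/x + 1/(2(x-4)) + 1/(2(x-16))`
theorem hasDerivAt_riccati_linear_coeff {x : ℝ} (h0 : x ≠ 0) (h4 : x ≠ 4) (h16 : x ≠ 16) :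
    HasDerivAt (fun t => 2 * (t^2 - 15*t + 32) / (t*(t-4)*(t-16)))
      (-1 / x^2 - 1 / (2*(x-4)^2) - 1 / (2*(x-16)^2)) x := by
  have h4' : x - 4 ≠ 0 := sub_ne_zero.mpr h4
  have h16' : x - 16 ≠ 0 := sub_ne_zero.mpr h16
  have hid := hasDerivAt_id' x
  have hnum := (((hid.pow 2).sub (hid.const_mul 15)).add_const 32).const_mul 2
  have hden := (hid.mul (hid.sub_const 4)).mul (hid.sub_const 16)
  refine (hnum.div hden (by simp [*])).congr_deriv ?_
  simp only [Pi.mul_apply, Pi.pow_apply, Pi.sub_apply]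
  field_simp
  ring

-- the coefficient is `-1/(16x) + 1/(24(x-4)) + 1/(48(x-16))`
theorem hasDerivAt_riccati_const_coeff {x : ℝ} (h0 : x ≠ 0) (h4 : x ≠ 4) (h16 : x ≠ 16) :
    HasDerivAt (fun t => (t-8) / (2*t*(t-4)*(t-16)))
      (1 / (16*x^2) - 1 / (24*(x-4)^2) - 1 / (48*(x-16)^2)) x := by
  have h4' : x - 4 ≠ 0 := sub_ne_zero.mpr h4
  have h16' : x - 16 ≠ 0 := sub_ne_zero.mpr h16
  have hid := hasDerivAt_id' x
  have hden := ((hid.const_mul 2).mul (hid.sub_const 4)).mul (hid.sub_const 16)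
  refine ((hid.sub_const 8).div hden (by simp [*])).congr_deriv ?_
  simp only [Pi.mul_apply]
  field_simp
  ring

theorem nonlinear_implies_L3
    (s : Set ℝ) (hs : IsOpen s)
    (hx : ∀ x ∈ s, x ≠ 0 ∧ x ≠ 4 ∧ x ≠ 16)
    (ω : ℝ → ℝ) (hω : ContDiffOn ℝ 2 ω s) (hnz : ∀ x ∈ s, ω x ≠ 0)
    (hode : ∀ x ∈ s, deriv (fun t => deriv ω t / ω t) x
      + (1/2) * (deriv ω x / ω x)^2
      + 2*(x^2 - 15*x + 32)/(x*(x-4)*(x-16)) * (deriv ω x / ω x)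
      + (x-8)/(2*x*(x-4)*(x-16)) = 0) :
    ∀ x ∈ s, deriv (deriv (deriv ω)) x
      + (3/x + 3/(2*(x-4)) + 3/(2*(x-16))) * deriv (deriv ω) x
      + (7*x^2 - 68*x + 64)/(x^2*(x-4)*(x-16)) * deriv ω x
      + 1/(x^2*(x-16)) * ω x = 0 := by
  intro x hxs
  have key := third_order_ode_of_riccati hs hω hnz
    (fun t ht => hasDerivAt_riccati_linear_coeff (hx t ht).1 (hx t ht).2.1 (hx t ht).2.2)
    (fun t ht => hasDerivAt_riccati_const_coeff (hx t ht).1 (hx t ht).2.1 (hx t ht).2.2) hode hxs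
  obtain ⟨h0, h4, h16⟩ := hx x hxs
  have h4' : x - 4 ≠ 0 := sub_ne_zero.mpr h4
  have h16' : x - 16 ≠ 0 := sub_ne_zero.mpr h16
  convert key using 4 <;> field_simp <;> ring
end

section
/- Under the substitution x = −(y−1)(y−9)/y, the equation ψ'' + (1/x + 1/(2(x-4)) + 1/(2(x-16)))ψ' + (x-8)/(4x(x-4)(x-16)) ψ = 0 transforms into ψ̃'' + (1/(y−1) + 1/(y−9)) ψ̃' + (y²−2y+9)/(4y²(y−1)(y−9)) ψ̃ = 0, where ψ̃(y) = ψ(x(y)) and primes now denote d/dy. -/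
/-!
With `x = g y` for `g y = -(y-1)(y-9)/y`, the chain rule gives
`(ψ ∘ g)'' = g'^2 ψ''(x) + g'' ψ'(x)` with `g' = 9/y^2 - 1` and `g'' = -18/y^3`. The transformed
operator applied to `ψ ∘ g` is then exactly `g'^2` times the original operator applied to `ψ` at
`x`, which comes down to two rational identities between the coefficients.
-/

open Filter Topology

section SecondDerivComp

variable {𝕜 : Type*} [NontriviallyNormedField 𝕜] {F : Type*} [NormedAddCommGroup F]
  [NormedSpace 𝕜 F]

theorem deriv_deriv_comp_of_hasDerivAt {ψ : 𝕜 → F} {g g' : 𝕜 → 𝕜} {g'' y : 𝕜}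
    (hg : ∀ᶠ z in 𝓝 y, HasDerivAt g (g' z) z) (hg' : HasDerivAt g' g'' y)
    (hψ : ∀ᶠ z in 𝓝 y, DifferentiableAt 𝕜 ψ (g z))
    (hψ' : DifferentiableAt 𝕜 (deriv ψ) (g y)) :
    deriv (deriv fun z => ψ (g z)) y
      = g' y ^ 2 • deriv (deriv ψ) (g y) + g'' • deriv ψ (g y) := by
  have hfirst : deriv (fun z => ψ (g z)) =ᶠ[𝓝 y] fun z => g' z • deriv ψ (g z) := by
    filter_upwards [hg, hψ] with z hgz hψz using (hψz.hasDerivAt.scomp z hgz).deriv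
  have hsecond := hg'.smul (hψ'.hasDerivAt.scomp y hg.self_of_nhds)
  rw [hfirst.deriv_eq, sq, ← smul_smul]
  exact hsecond.deriv

end SecondDerivComp

noncomputable section BananaMap

def bananaMap (y : ℝ) : ℝ := -(y - 1) * (y - 9) / y

theorem hasDerivAt_bananaMap {y : ℝ} (hy : y ≠ 0) :
    HasDerivAt bananaMap (9 / y ^ 2 - 1) y := by
  have h := (((hasDerivAt_id' y).sub_const 1).neg.mul ((hasDerivAt_id' y).sub_const 9)).div
    (hasDerivAt_id' y) hy
  exact h.congr_deriv (by simp only [Pi.neg_apply, Pi.mul_apply]; field_simp; ring)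

theorem hasDerivAt_bananaMap_deriv {y : ℝ} (hy : y ≠ 0) :
    HasDerivAt (fun z : ℝ => 9 / z ^ 2 - 1) (-18 / y ^ 3) y := by
  have h := ((hasDerivAt_const y (9 : ℝ)).div (hasDerivAt_pow 2 y) (pow_ne_zero 2 hy)).sub_const 1
  exact h.congr_deriv (by field_simp; ring)

theorem bananaMap_sub_four {y : ℝ} (hy : y ≠ 0) : bananaMap y - 4 = -(y - 3) ^ 2 / y := by
  rw [bananaMap]; field_simp; ring

theorem bananaMap_sub_eight {y : ℝ} (hy : y ≠ 0) :
    bananaMap y - 8 = -(y ^ 2 - 2 * y + 9) / y := by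
  rw [bananaMap]; field_simp; ring

theorem bananaMap_sub_sixteen {y : ℝ} (hy : y ≠ 0) : bananaMap y - 16 = -(y + 3) ^ 2 / y := by
  rw [bananaMap]; field_simp; ring

variable {y : ℝ} (h0 : y ≠ 0) (h1 : y ≠ 1) (h9 : y ≠ 9) (h3 : y ≠ 3) (h3' : y ≠ -3)
include h0 h1 h9 h3 h3'

theorem bananaMap_first_coeff :
    (1 / (y - 1) + 1 / (y - 9)) * (9 / y ^ 2 - 1)
      = (9 / y ^ 2 - 1) ^ 2 * (1 / bananaMap y + 1 / (2 * (bananaMap y - 4))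
          + 1 / (2 * (bananaMap y - 16))) - (-18 / y ^ 3) := by
  have : y - 1 ≠ 0 := sub_ne_zero.mpr h1
  have : y - 9 ≠ 0 := sub_ne_zero.mpr h9
  have : y - 3 ≠ 0 := sub_ne_zero.mpr h3
  have : y + 3 ≠ 0 := by rwa [← sub_neg_eq_add, sub_ne_zero]
  rw [bananaMap_sub_four h0, bananaMap_sub_sixteen h0, bananaMap]
  field_simp
  ring

theorem bananaMap_zeroth_coeff :
    (y ^ 2 - 2 * y + 9) / (4 * y ^ 2 * (y - 1) * (y - 9))
      = (9 / y ^ 2 - 1) ^ 2 * ((bananaMap y - 8)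
          / (4 * bananaMap y * (bananaMap y - 4) * (bananaMap y - 16))) := by
  have : y - 1 ≠ 0 := sub_ne_zero.mpr h1
  have : y - 9 ≠ 0 := sub_ne_zero.mpr h9
  have : y - 3 ≠ 0 := sub_ne_zero.mpr h3
  have : y + 3 ≠ 0 := by rwa [← sub_neg_eq_add, sub_ne_zero]
  rw [bananaMap_sub_four h0, bananaMap_sub_eight h0, bananaMap_sub_sixteen h0, bananaMap]
  field_simp
  ring

end BananaMap

theorem banana_change_of_variables_general
    (t : Set ℝ) (ht : IsOpen t)
    (ψ : ℝ → ℝ) (hψ : ContDiffOn ℝ 2 ψ t)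
    (hode : ∀ x ∈ t, deriv (deriv ψ) x
      + (1/x + 1/(2*(x-4)) + 1/(2*(x-16))) * deriv ψ x
      + (x-8)/(4*x*(x-4)*(x-16)) * ψ x = 0)
    (s : Set ℝ) (hs : IsOpen s)
    (hy : ∀ y ∈ s, y ≠ 0 ∧ y ≠ 1 ∧ y ≠ 9 ∧ y ≠ 3 ∧ y ≠ -3)
    (hmap : ∀ y ∈ s, -(y-1)*(y-9)/y ∈ t) :
    ∀ y ∈ s, deriv (deriv (fun z => ψ (-(z-1)*(z-9)/z))) y
      + (1/(y-1) + 1/(y-9)) * deriv (fun z => ψ (-(z-1)*(z-9)/z)) y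
      + (y^2 - 2*y + 9)/(4*y^2*(y-1)*(y-9)) * ψ (-(y-1)*(y-9)/y) = 0 := by
  intro y hys
  obtain ⟨h0, h1, h9, h3, h3'⟩ := hy y hys
  have hmap' : ∀ z ∈ s, bananaMap z ∈ t := hmap
  have hψ_diff : ∀ z ∈ s, DifferentiableAt ℝ ψ (bananaMap z) := fun z hz =>
    (hψ.differentiableOn two_ne_zero).differentiableAt (ht.mem_nhds (hmap' z hz))
  have hψ'_diff : DifferentiableAt ℝ (deriv ψ) (bananaMap y) :=
    ((hψ.deriv_of_isOpen ht (m := 1) (by norm_num)).differentiableOn one_ne_zero).differentiableAt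
      (ht.mem_nhds (hmap' y hys))
  have hfirst := ((hψ_diff y hys).hasDerivAt.comp y (hasDerivAt_bananaMap h0)).deriv
  have hsecond := deriv_deriv_comp_of_hasDerivAt
    ((eventually_ne_nhds h0).mono fun z hz => hasDerivAt_bananaMap hz)
    (hasDerivAt_bananaMap_deriv h0)
    (eventually_of_mem (hs.mem_nhds hys) hψ_diff) hψ'_diff
  have hc1 := bananaMap_first_coeff h0 h1 h9 h3 h3'
  have hc0 := bananaMap_zeroth_coeff h0 h1 h9 h3 h3'
  simp only [bananaMap, Function.comp_def, smul_eq_mul] at hfirst hsecond hc1 hc0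
  rw [hsecond, hfirst]
  linear_combination (9 / y ^ 2 - 1) ^ 2 * hode _ (hmap y hys)
    + deriv ψ (-(y-1)*(y-9)/y) * hc1 + ψ (-(y-1)*(y-9)/y) * hc0

theorem banana_change_of_variables
    (t : Set ℝ) (ht : IsOpen t) (hxt : ∀ x ∈ t, x ≠ 0 ∧ x ≠ 4 ∧ x ≠ 16)
    (ψ : ℝ → ℝ) (hψ : ContDiffOn ℝ 2 ψ t)
    (hode : ∀ x ∈ t, deriv (deriv ψ) x
      + (1/x + 1/(2*(x-4)) + 1/(2*(x-16))) * deriv ψ x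
      + (x-8)/(4*x*(x-4)*(x-16)) * ψ x = 0)
    (s : Set ℝ) (hs : IsOpen s)
    (hy : ∀ y ∈ s, y ≠ 0 ∧ y ≠ 1 ∧ y ≠ 9 ∧ y ≠ 3 ∧ y ≠ -3)
    (hmap : ∀ y ∈ s, -(y-1)*(y-9)/y ∈ t) :
    ∀ y ∈ s, deriv (deriv (fun z => ψ (-(z-1)*(z-9)/z))) y
      + (1/(y-1) + 1/(y-9)) * deriv (fun z => ψ (-(z-1)*(z-9)/z)) y
      + (y^2 - 2*y + 9)/(4*y^2*(y-1)*(y-9)) * ψ (-(y-1)*(y-9)/y) = 0 :=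
  banana_change_of_variables_general t ht ψ hψ hode s hs hy hmap
end

section
/- If φ(y) satisfies φ'' + (1/(y−1) + 1/(y−9)) φ' + (y²−2y+9)/(4y²(y−1)(y−9)) φ = 0, then χ(y) = φ(y)/√y satisfies the sunrise Picard–Fuchs equation χ'' + (1/y + 1/(y−1) + 1/(y−9)) χ' + (y−3)/(y(y−1)(y−9)) χ = 0, and conversely. -/
/-!
Write `φ / √y = φ · g` with `g y = (√y)⁻¹`. Then `g' = -g / (2y)` and `g'' = 3g / (4y²)`, so by
the Leibniz rule `(φg)'' = φ''g + 2φ'g' + φg''` the sunrise operator applied to `φ / √y` is the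
banana operator applied to `φ`, divided by `√y`. As `√y ≠ 0`, the two equations are equivalent.
-/

open Filter Topology

theorem deriv_deriv_mul {𝕜 𝔸 : Type*} [NontriviallyNormedField 𝕜] [NormedRing 𝔸]
    [NormedAlgebra 𝕜 𝔸] {f g : 𝕜 → 𝔸} {x : 𝕜} (hf : ContDiffAt 𝕜 2 f x)
    (hg : ContDiffAt 𝕜 2 g x) :
    deriv (deriv fun z => f z * g z) x =
      deriv (deriv f) x * g x + 2 * (deriv f x * deriv g x) + f x * deriv (deriv g) x := by
  have hderiv : deriv (fun z => f z * g z) =ᶠ[𝓝 x] fun z => deriv f z * g z + f z * deriv g z := by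
    filter_upwards [hf.eventually (by simp), hg.eventually (by simp)] with z hfz hgz
    exact ((hfz.differentiableAt two_ne_zero).hasDerivAt.fun_mul
      (hgz.differentiableAt two_ne_zero).hasDerivAt).deriv
  have hf' : DifferentiableAt 𝕜 (deriv f) x :=
    (hf.derivWithin (m := 1) (by norm_num)).differentiableAt one_ne_zero
  have hg' : DifferentiableAt 𝕜 (deriv g) x :=
    (hg.derivWithin (m := 1) (by norm_num)).differentiableAt one_ne_zero
  have hf1 := (hf.differentiableAt two_ne_zero).hasDerivAt
  have hg1 := (hg.differentiableAt two_ne_zero).hasDerivAt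
  rw [hderiv.deriv_eq, ((hf'.hasDerivAt.fun_mul hg1).fun_add (hf1.fun_mul hg'.hasDerivAt)).deriv,
    two_mul]
  abel

namespace Real

theorem hasDerivAt_inv_sqrt {x : ℝ} (hx : 0 < x) :
    HasDerivAt (fun z => (√z)⁻¹) (-(√x)⁻¹ / (2 * x)) x := by
  refine ((hasDerivAt_sqrt hx.ne').inv (sqrt_pos.mpr hx).ne').congr_deriv ?_
  field_simp
  rw [sq_sqrt hx.le]

theorem hasDerivAt_deriv_inv_sqrt {x : ℝ} (hx : 0 < x) :
    HasDerivAt (deriv fun z => (√z)⁻¹) (3 * (√x)⁻¹ / (4 * x ^ 2)) x := by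
  have hderiv : deriv (fun z => (√z)⁻¹) =ᶠ[𝓝 x] fun z => -(√z)⁻¹ / (2 * z) := by
    filter_upwards [lt_mem_nhds hx] with z hz
    exact (hasDerivAt_inv_sqrt hz).deriv
  refine HasDerivAt.congr_of_eventuallyEq ?_ hderiv
  refine ((hasDerivAt_inv_sqrt hx).fun_neg.div ((hasDerivAt_id' x).const_mul 2)
    (by positivity)).congr_deriv ?_
  field_simp
  ring

theorem contDiffAt_inv_sqrt {n : WithTop ℕ∞} {x : ℝ} (hx : 0 < x) :
    ContDiffAt ℝ n (fun z => (√z)⁻¹) x :=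
  (contDiffAt_sqrt hx.ne').inv (sqrt_pos.mpr hx).ne'

end Real

noncomputable def bananaOp (φ : ℝ → ℝ) (y : ℝ) : ℝ :=
  deriv (deriv φ) y + (1/(y-1) + 1/(y-9)) * deriv φ y
    + (y^2 - 2*y + 9)/(4*y^2*(y-1)*(y-9)) * φ y

noncomputable def sunriseOp (χ : ℝ → ℝ) (y : ℝ) : ℝ :=
  deriv (deriv χ) y + (1/y + 1/(y-1) + 1/(y-9)) * deriv χ y + (y-3)/(y*(y-1)*(y-9)) * χ y

theorem sunriseOp_div_sqrt {φ : ℝ → ℝ} {y : ℝ} (hy0 : 0 < y) (hy1 : y ≠ 1) (hy9 : y ≠ 9)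
    (hφ : ContDiffAt ℝ 2 φ y) :
    sunriseOp (fun z => φ z / √z) y = bananaOp φ y / √y := by
  have hχ : (fun z => φ z / √z) = fun z => φ z * (√z)⁻¹ := by simp only [div_eq_mul_inv]
  have hg := Real.hasDerivAt_inv_sqrt hy0
  have hy1' : y - 1 ≠ 0 := sub_ne_zero.mpr hy1
  have hy9' : y - 9 ≠ 0 := sub_ne_zero.mpr hy9
  unfold sunriseOp bananaOp
  rw [hχ, deriv_deriv_mul hφ (Real.contDiffAt_inv_sqrt hy0),
    ((hφ.differentiableAt two_ne_zero).hasDerivAt.fun_mul hg).deriv, hg.deriv,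
    (Real.hasDerivAt_deriv_inv_sqrt hy0).deriv]
  field_simp
  ring

theorem sunrise_sqrt_factor
    (s : Set ℝ) (hs : IsOpen s)
    (hy : ∀ y ∈ s, 0 < y ∧ y ≠ 1 ∧ y ≠ 9)
    (φ : ℝ → ℝ) (hφ : ContDiffOn ℝ 2 φ s) :
    (∀ y ∈ s, deriv (deriv φ) y
      + (1/(y-1) + 1/(y-9)) * deriv φ y
      + (y^2 - 2*y + 9)/(4*y^2*(y-1)*(y-9)) * φ y = 0)
    ↔
    (∀ y ∈ s, deriv (deriv (fun z => φ z / Real.sqrt z)) y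
      + (1/y + 1/(y-1) + 1/(y-9)) * deriv (fun z => φ z / Real.sqrt z) y
      + (y-3)/(y*(y-1)*(y-9)) * (φ y / Real.sqrt y) = 0) := by
  refine forall₂_congr fun y hys => ?_
  obtain ⟨hy0, hy1, hy9⟩ := hy y hys
  change bananaOp φ y = 0 ↔ sunriseOp (fun z => φ z / √z) y = 0
  rw [sunriseOp_div_sqrt hy0 hy1 hy9 (hφ.contDiffAt (hs.mem_nhds hys)), div_eq_zero_iff,
    or_iff_left (Real.sqrt_pos.mpr hy0).ne']
end
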